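/- There is no integer 6×2 matrix Q with QᵀQ = 3·[[2,1],[1,2]] all of whose rows are nonzero. -/
import Mathlib

open Matrix

/-- The six possible `(a², b², ab)` types of a row with Eisenstein norm `1` or `4`. -/
private def tyz : Fin 6 → ℤ × ℤ × ℤ := ![(1,0,0),(0,1,0),(1,1,1),(4,0,0),(0,4,0),(4,4,4)]

set_option maxHeartbeats 4000000 in
set_option maxRecDepth 100000 in
private lemma no6 : ∀ a b c d e f : Fin 6,
    ¬ ((tyz a).1 + (tyz b).1 + (tyz c).1 + (tyz d).1 + (tyz e).1 + (tyz f).1 = 6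
     ∧ (tyz a).2.1 + (tyz b).2.1 + (tyz c).2.1 + (tyz d).2.1 + (tyz e).2.1 + (tyz f).2.1 = 6
     ∧ (tyz a).2.2 + (tyz b).2.2 + (tyz c).2.2 + (tyz d).2.2 + (tyz e).2.2 + (tyz f).2.2 = 3) := by
  decide

private lemma bound5 (b : ℤ) (h : b ^ 2 ≤ 5) : -2 ≤ b ∧ b ≤ 2 := by
  constructor <;> nlinarith [sq_nonneg (b + 3), sq_nonneg (b - 3)]

private lemma no_two (a b : ℤ) (h : a ^ 2 - a * b + b ^ 2 = 2) : False := by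
  have hb : b ^ 2 ≤ 5 := by nlinarith [sq_nonneg (2 * a - b)]
  have ha : a ^ 2 ≤ 5 := by nlinarith [sq_nonneg (2 * b - a)]
  obtain ⟨hb1, hb2⟩ := bound5 b hb
  obtain ⟨ha1, ha2⟩ := bound5 a ha
  interval_cases a <;> interval_cases b <;> norm_num at h

private lemma pos_norm (a b : ℤ) (h : a ≠ 0 ∨ b ≠ 0) : 1 ≤ a ^ 2 - a * b + b ^ 2 := by
  have h2 : 0 < a ^ 2 + b ^ 2 + (a - b) ^ 2 := by
    rcases h with h | h <;> positivity
  nlinarith [sq_nonneg (a - b)]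

private lemma six_vals (n0 n1 n2 n3 n4 n5 : ℤ)
    (h0 : 1 ≤ n0) (h0' : n0 ≠ 2) (h1 : 1 ≤ n1) (h1' : n1 ≠ 2)
    (h2 : 1 ≤ n2) (h2' : n2 ≠ 2) (h3 : 1 ≤ n3) (h3' : n3 ≠ 2)
    (h4 : 1 ≤ n4) (h4' : n4 ≠ 2) (h5 : 1 ≤ n5) (h5' : n5 ≠ 2)
    (hs : n0 + n1 + n2 + n3 + n4 + n5 = 9) :
    (n0 = 1 ∨ n0 = 4) ∧ (n1 = 1 ∨ n1 = 4) ∧ (n2 = 1 ∨ n2 = 4) ∧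
    (n3 = 1 ∨ n3 = 4) ∧ (n4 = 1 ∨ n4 = 4) ∧ (n5 = 1 ∨ n5 = 4) := by
  omega

private lemma row_types (a b : ℤ) (h : a ^ 2 - a * b + b ^ 2 = 1 ∨ a ^ 2 - a * b + b ^ 2 = 4) :
    ∃ k : Fin 6, a ^ 2 = (tyz k).1 ∧ b ^ 2 = (tyz k).2.1 ∧ a * b = (tyz k).2.2 := by
  have hn : a ^ 2 - a * b + b ^ 2 ≤ 4 := by rcases h with h | h <;> omega
  have hb : b ^ 2 ≤ 5 := by nlinarith [sq_nonneg (2 * a - b)]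
  have ha : a ^ 2 ≤ 5 := by nlinarith [sq_nonneg (2 * b - a)]
  obtain ⟨hb1, hb2⟩ := bound5 b hb
  obtain ⟨ha1, ha2⟩ := bound5 a ha
  interval_cases a <;> interval_cases b <;>
    first
    | (refine ⟨0, ?_, ?_, ?_⟩ <;> decide)
    | (refine ⟨1, ?_, ?_, ?_⟩ <;> decide)
    | (refine ⟨2, ?_, ?_, ?_⟩ <;> decide)
    | (refine ⟨3, ?_, ?_, ?_⟩ <;> decide)
    | (refine ⟨4, ?_, ?_, ?_⟩ <;> decide)
    | (refine ⟨5, ?_, ?_, ?_⟩ <;> decide)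
    | (exfalso; rcases h with h | h <;> norm_num at h)

/-- There is no integer `6 × 2` matrix `Q` with `QᵀQ = [[6,3],[3,6]]` all of whose rows are
nonzero. -/
theorem stmt_11 :
    ¬ ∃ Q : Matrix (Fin 6) (Fin 2) ℤ,
        Qᵀ * Q = !![6, 3; 3, 6] ∧ ∀ i, (fun j => Q i j) ≠ 0 := by
  rintro ⟨Q, hQ, hrow⟩
  have e1 := congrFun (congrFun hQ 0) 0
  have e2 := congrFun (congrFun hQ 0) 1
  have e3 := congrFun (congrFun hQ 1) 1
  simp [Matrix.mul_apply, Fin.sum_univ_six, Matrix.transpose_apply] at e1 e2 e3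
  have hne : ∀ i : Fin 6, Q i 0 ≠ 0 ∨ Q i 1 ≠ 0 := by
    intro i
    by_contra h
    push_neg at h
    exact hrow i (funext fun j => by fin_cases j <;> simp [h.1, h.2])
  have hs : (Q 0 0 ^ 2 - Q 0 0 * Q 0 1 + Q 0 1 ^ 2) + (Q 1 0 ^ 2 - Q 1 0 * Q 1 1 + Q 1 1 ^ 2) +
      (Q 2 0 ^ 2 - Q 2 0 * Q 2 1 + Q 2 1 ^ 2) + (Q 3 0 ^ 2 - Q 3 0 * Q 3 1 + Q 3 1 ^ 2) +
      (Q 4 0 ^ 2 - Q 4 0 * Q 4 1 + Q 4 1 ^ 2) + (Q 5 0 ^ 2 - Q 5 0 * Q 5 1 + Q 5 1 ^ 2) = 9 := by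
    linear_combination e1 - e2 + e3
  have hpos : ∀ i : Fin 6, 1 ≤ Q i 0 ^ 2 - Q i 0 * Q i 1 + Q i 1 ^ 2 := fun i =>
    pos_norm _ _ (hne i)
  have hnt : ∀ i : Fin 6, Q i 0 ^ 2 - Q i 0 * Q i 1 + Q i 1 ^ 2 ≠ 2 := fun i h =>
    no_two _ _ h
  obtain ⟨k0, k1, k2, k3, k4, k5⟩ := six_vals _ _ _ _ _ _
    (hpos 0) (hnt 0) (hpos 1) (hnt 1) (hpos 2) (hnt 2)
    (hpos 3) (hnt 3) (hpos 4) (hnt 4) (hpos 5) (hnt 5) hs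
  obtain ⟨i0, s0, t0, p0⟩ := row_types _ _ k0
  obtain ⟨i1, s1, t1, p1⟩ := row_types _ _ k1
  obtain ⟨i2, s2, t2, p2⟩ := row_types _ _ k2
  obtain ⟨i3, s3, t3, p3⟩ := row_types _ _ k3
  obtain ⟨i4, s4, t4, p4⟩ := row_types _ _ k4
  obtain ⟨i5, s5, t5, p5⟩ := row_types _ _ k5
  exact no6 i0 i1 i2 i3 i4 i5
    ⟨by rw [← s0, ← s1, ← s2, ← s3, ← s4, ← s5]; linear_combination e1,
     by rw [← t0, ← t1, ← t2, ← t3, ← t4, ← t5]; linear_combination e3,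
     by rw [← p0, ← p1, ← p2, ← p3, ← p4, ← p5]; linear_combination e2⟩
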